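/- Let α, β, γ be pairwise distinct circles each containing the origin strictly inside ('type I' circles). Suppose there exists t > 0 such that the circle with center (t, t) and radius t is tangent to each of α, β, γ. Then some two of the circles α, β, γ have a common point in the open first quadrant. -/

import Mathlib

noncomputable section

/-- The Euclidean plane. -/
abbrev Plane := EuclideanSpace ℝ (Fin 2)

/-- Two circles (center, radius) are tangent: they are distinct and the distance between
centers equals the sum (external) or the absolute difference (internal) of the radii. -/
def Tangent (A B : Plane × ℝ) : Prop :=
  A ≠ B ∧ (dist A.1 B.1 = A.2 + B.2 ∨ dist A.1 B.1 = |A.2 - B.2|)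

/-- The point of the plane with the given coordinates. -/
def pt (x y : ℝ) : Plane := WithLp.toLp 2 ![x, y]

set_option maxHeartbeats 2500000



/-- The positive root of the radial quadratic. -/
noncomputable def radMu (a0 b0 c : ℝ) : ℝ := (a0 + Real.sqrt (a0^2 - b0*c)) / b0

lemma radMu_one (a0 b0 c : ℝ) (hb : 0 < b0) (hc : c < 0) (hcircle : b0 - 2*a0 + c = 0) :
    radMu a0 b0 c = 1 := by
  have hkey : a0^2 - b0*c = (b0 - a0)^2 := by linear_combination (-b0) * hcircle
  have hle : a0 ≤ b0 := by linarith
  unfold radMu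
  rw [hkey, Real.sqrt_sq (by linarith)]
  rw [div_eq_one_iff_eq (ne_of_gt hb)]; ring

lemma radMu_pos (a0 b0 c : ℝ) (hb : 0 < b0) (hc : c < 0) : 0 < radMu a0 b0 c := by
  have hsqarg : 0 < a0^2 - b0*c := by nlinarith [sq_nonneg a0, mul_pos hb (neg_pos.mpr hc)]
  have hsq : (Real.sqrt (a0^2 - b0*c))^2 = a0^2 - b0*c := Real.sq_sqrt hsqarg.le
  have hsnn : 0 ≤ Real.sqrt (a0^2 - b0*c) := Real.sqrt_nonneg _
  have hnum : 0 < a0 + Real.sqrt (a0^2 - b0*c) := by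
    by_contra hle
    push_neg at hle
    have h1 : Real.sqrt (a0^2 - b0*c) ≤ -a0 := by linarith
    have h2 := mul_self_le_mul_self hsnn h1
    nlinarith [hsq]
  unfold radMu
  exact div_pos hnum hb

lemma radMu_root (a0 b0 c : ℝ) (hb : 0 < b0) (hc : c < 0) :
    b0 * (radMu a0 b0 c)^2 - 2*a0*(radMu a0 b0 c) + c = 0 := by
  have hsqarg : 0 < a0^2 - b0*c := by nlinarith [sq_nonneg a0, mul_pos hb (neg_pos.mpr hc)]
  have hBμ : b0 * radMu a0 b0 c = a0 + Real.sqrt (a0^2 - b0*c) := by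
    unfold radMu; field_simp
  have h2 : (b0 * radMu a0 b0 c - a0)^2 = a0^2 - b0*c := by
    rw [hBμ, show a0 + Real.sqrt (a0^2 - b0*c) - a0 = Real.sqrt (a0^2 - b0*c) from by ring]
    exact Real.sq_sqrt hsqarg.le
  have h3 : b0 * (b0 * (radMu a0 b0 c)^2 - 2*a0*(radMu a0 b0 c) + c) = 0 := by
    linear_combination h2
  rcases mul_eq_zero.mp h3 with h | h
  · exact absurd h (ne_of_gt hb)
  · exact h

/-- IVT along a radially-projected segment. -/
lemma ivt_arc (o1 o2 r b1 b2 k p01 p02 p11 p12 : ℝ)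
    (hc : o1^2+o2^2 < r^2)
    (h0a : (p01-o1)^2+(p02-o2)^2 = r^2)
    (h1a : (p11-o1)^2+(p12-o2)^2 = r^2)
    (h01 : 0 ≤ p01) (h02 : 0 ≤ p02) (h0s : 0 < p01+p02)
    (h11 : 0 < p11) (h12 : 0 < p12)
    (hsign : ((p01-b1)^2+(p02-b2)^2-k) * ((p11-b1)^2+(p12-b2)^2-k) < 0) :
    ∃ z1 z2 : ℝ, 0 < z1 ∧ 0 < z2 ∧ (z1-o1)^2+(z2-o2)^2 = r^2 ∧ (z1-b1)^2+(z2-b2)^2 = k := by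
  set c : ℝ := o1^2+o2^2 - r^2 with hcdef
  have hcneg : c < 0 := by simp only [hcdef]; linarith
  set d1 : ℝ → ℝ := fun τ => p01 + τ*(p11-p01) with hd1def
  set d2 : ℝ → ℝ := fun τ => p02 + τ*(p12-p02) with hd2def
  set B : ℝ → ℝ := fun τ => (d1 τ)^2 + (d2 τ)^2 with hBdef
  set A : ℝ → ℝ := fun τ => d1 τ * o1 + d2 τ * o2 with hAdef
  set F : ℝ → ℝ := fun τ =>
    (radMu (A τ) (B τ) c * d1 τ - b1)^2 + (radMu (A τ) (B τ) c * d2 τ - b2)^2 - k with hFdef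
  have hd1nn : ∀ τ ∈ Set.Icc (0:ℝ) 1, 0 ≤ d1 τ := by
    intro τ hτ; obtain ⟨h0, h1⟩ := hτ
    simp only [hd1def]; nlinarith
  have hd2nn : ∀ τ ∈ Set.Icc (0:ℝ) 1, 0 ≤ d2 τ := by
    intro τ hτ; obtain ⟨h0, h1⟩ := hτ
    simp only [hd2def]; nlinarith
  have hdsum : ∀ τ ∈ Set.Icc (0:ℝ) 1, 0 < d1 τ + d2 τ := by
    intro τ hτ; obtain ⟨h0, h1⟩ := hτ
    simp only [hd1def, hd2def]
    rcases le_total (p01+p02) (p11+p12) with h|h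
    · nlinarith [mul_nonneg h0 (by linarith : (0:ℝ) ≤ p11+p12-(p01+p02))]
    · nlinarith [mul_nonneg (by linarith : (0:ℝ) ≤ 1-τ)
        (by linarith : (0:ℝ) ≤ (p01+p02)-(p11+p12))]
  have hBpos : ∀ τ ∈ Set.Icc (0:ℝ) 1, 0 < B τ := by
    intro τ hτ
    have h1 := hd1nn τ hτ; have h2 := hd2nn τ hτ; have h3 := hdsum τ hτ
    simp only [hBdef]
    rcases lt_or_ge 0 (d1 τ) with h|h
    · nlinarith [sq_nonneg (d2 τ)]
    · have : 0 < d2 τ := by linarith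
      nlinarith [sq_nonneg (d1 τ)]
  have hd1c : Continuous d1 := by simp only [hd1def]; continuity
  have hd2c : Continuous d2 := by simp only [hd2def]; continuity
  have hBc : Continuous B := by simp only [hBdef]; continuity
  have hAc : Continuous A := by simp only [hAdef]; continuity
  have hSc : Continuous (fun τ => Real.sqrt ((A τ)^2 - B τ * c)) :=
    Real.continuous_sqrt.comp (by continuity)
  have hμc : ContinuousOn (fun τ => radMu (A τ) (B τ) c) (Set.Icc (0:ℝ) 1) := by
    unfold radMu
    exact ContinuousOn.div ((hAc.add hSc).continuousOn) hBc.continuousOn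
      (fun τ hτ => ne_of_gt (hBpos τ hτ))
  have hFc : ContinuousOn F (Set.Icc (0:ℝ) 1) := by
    simp only [hFdef]
    apply ContinuousOn.sub _ continuousOn_const
    apply ContinuousOn.add
    · exact ((hμc.mul hd1c.continuousOn).sub continuousOn_const).pow 2
    · exact ((hμc.mul hd2c.continuousOn).sub continuousOn_const).pow 2
  have hd10 : d1 0 = p01 := by simp [hd1def]
  have hd20 : d2 0 = p02 := by simp [hd2def]
  have hd11 : d1 1 = p11 := by simp [hd1def]
  have hd21 : d2 1 = p12 := by simp [hd2def]
  have hB0pos : 0 < B 0 := hBpos 0 (by norm_num)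
  have hB1pos : 0 < B 1 := hBpos 1 (by norm_num)
  have hμ0 : radMu (A 0) (B 0) c = 1 := by
    apply radMu_one _ _ _ hB0pos hcneg
    simp only [hBdef, hAdef, hd10, hd20, hcdef]
    linear_combination h0a
  have hμ1 : radMu (A 1) (B 1) c = 1 := by
    apply radMu_one _ _ _ hB1pos hcneg
    simp only [hBdef, hAdef, hd11, hd21, hcdef]
    linear_combination h1a
  have hF0 : F 0 = (p01-b1)^2+(p02-b2)^2-k := by
    simp only [hFdef]; rw [hμ0, hd10, hd20]; ring
  have hF1 : F 1 = (p11-b1)^2+(p12-b2)^2-k := by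
    simp only [hFdef]; rw [hμ1, hd11, hd21]; ring
  have huIcc : Set.uIcc (0:ℝ) 1 = Set.Icc 0 1 := Set.uIcc_of_le (by norm_num)
  have hprod : F 0 * F 1 < 0 := by rw [hF0, hF1]; exact hsign
  have hmem : (0:ℝ) ∈ Set.uIcc (F 0) (F 1) := by
    rcases mul_neg_iff.mp hprod with ⟨h1, h2⟩ | ⟨h1, h2⟩
    · exact Set.mem_uIcc.mpr (Or.inr ⟨le_of_lt h2, le_of_lt h1⟩)
    · exact Set.mem_uIcc.mpr (Or.inl ⟨le_of_lt h1, le_of_lt h2⟩)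
  have hivt := intermediate_value_uIcc (by rw [huIcc]; exact hFc)
  obtain ⟨τ₀, hτ₀mem, hFτ₀⟩ := hivt hmem
  rw [huIcc] at hτ₀mem
  obtain ⟨hτ₀0, hτ₀1⟩ := hτ₀mem
  have hF0ne : F 0 ≠ 0 := by intro h; rw [h] at hprod; linarith
  have hF1ne : F 1 ≠ 0 := by intro h; rw [h] at hprod; linarith
  have hτ₀pos : 0 < τ₀ := by
    rcases lt_or_eq_of_le hτ₀0 with h | h
    · exact h
    · rw [← h] at hFτ₀; exact absurd hFτ₀ hF0ne
  have hτ₀lt : τ₀ < 1 := by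
    rcases lt_or_eq_of_le hτ₀1 with h | h
    · exact h
    · rw [h] at hFτ₀; exact absurd hFτ₀ hF1ne
  have hmem' : τ₀ ∈ Set.Icc (0:ℝ) 1 := ⟨hτ₀0, hτ₀1⟩
  have hBτ : 0 < B τ₀ := hBpos τ₀ hmem'
  have hd1τ : 0 < d1 τ₀ := by
    simp only [hd1def]
    nlinarith [mul_nonneg (by linarith : (0:ℝ) ≤ 1-τ₀) h01, mul_pos hτ₀pos h11]
  have hd2τ : 0 < d2 τ₀ := by
    simp only [hd2def]
    nlinarith [mul_nonneg (by linarith : (0:ℝ) ≤ 1-τ₀) h02, mul_pos hτ₀pos h12]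
  have hμpos : 0 < radMu (A τ₀) (B τ₀) c := radMu_pos _ _ _ hBτ hcneg
  have hroot := radMu_root (A τ₀) (B τ₀) c hBτ hcneg
  refine ⟨radMu (A τ₀) (B τ₀) c * d1 τ₀, radMu (A τ₀) (B τ₀) c * d2 τ₀,
    by positivity, by positivity, ?_, ?_⟩
  · have hAv : A τ₀ = d1 τ₀ * o1 + d2 τ₀ * o2 := by simp only [hAdef]
    have hBv : B τ₀ = (d1 τ₀)^2 + (d2 τ₀)^2 := by simp only [hBdef]
    have hcv : c = o1^2+o2^2 - r^2 := hcdef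
    linear_combination hroot - (radMu (A τ₀) (B τ₀) c)^2 * hBv
      + 2*(radMu (A τ₀) (B τ₀) c) * hAv - hcv
  · have : F τ₀ = 0 := hFτ₀
    simp only [hFdef] at this
    linarith



private lemma signA (L P R : ℝ) (h : L^2*P + L*R = 0) (hP : 0 < P) (hL : L ≠ 0)
    (hRnn : 0 ≤ R) : L < 0 := by
  have hL2 : 0 < L^2 := by
    rcases lt_or_gt_of_ne hL with h' | h' <;> nlinarith
  have hLR : L*R < 0 := by nlinarith [mul_pos hL2 hP]
  rcases lt_or_gt_of_ne hL with h' | h'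
  · exact h'
  · nlinarith [mul_nonneg h'.le hRnn]


private lemma deg2aux (x y : ℝ) (h1 : x*y = x + y) (h2 : x + y = 2) : False := by
  nlinarith [sq_nonneg (x - y)]

private lemma deg2aux' (x y : ℝ) (hx : 0 < x) (hy : 0 < y) (hN : 1 - x - y = 0)
    (hK : (1-x-y)^2 - x^2 - y^2 = 0) : False := by nlinarith

private lemma sigma1Branch (L N S1 S2 xy x2y2 : ℝ)
    (key2 : L*(S1+S2) + 2*N*x2y2 = 0)
    (hLneg : L < 0) (hS1 : 0 < S1) (hS2 : 0 < S2)
    (hxy : 0 < xy) (hx2y2 : 0 < x2y2) (hLval : L = xy + 2*N) : False := by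
  have h1 : 0 < (-L)*(S1+S2) := mul_pos (neg_pos.mpr hLneg) (add_pos hS1 hS2)
  have hN : 0 < N := by nlinarith
  nlinarith

private lemma sigma2Branch (L N M K c1 c2 S1 S2 xy x2y2 : ℝ)
    (hsum : L*(c1+c2) + 2*M*N = 0)
    (hprodv : L^2*(c1*c2) - L*(xy*K) = 0)
    (key2 : L*(S1+S2) + 2*N*x2y2 = 0)
    (hLneg : L < 0) (hS1 : S1 < 0) (hS2 : S2 < 0) (hc1 : c1 < 0) (hc2 : c2 < 0)
    (hxy : 0 < xy) (hx2y2 : 0 < x2y2) (hKM : K = 1 + 2*M) : False := by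
  have h1 : 0 < L*(S1+S2) := mul_pos_of_neg_of_neg hLneg (by linarith)
  have hN : N < 0 := by nlinarith
  have h2 : 0 < L*(c1+c2) := mul_pos_of_neg_of_neg hLneg (by linarith)
  have hMN : M*N < 0 := by linarith
  have hM : 0 < M := by
    rcases lt_trichotomy M 0 with h | h | h
    · nlinarith [mul_pos_of_neg_of_neg h hN]
    · rw [h] at hMN; linarith
    · exact h
  have h3 : 0 < L^2*(c1*c2) := by
    have := mul_pos_of_neg_of_neg hc1 hc2
    have hL2 : 0 < L^2 := by nlinarith
    exact mul_pos hL2 this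
  have h4 : 0 < L*(xy*K) := by linarith
  have hK : K < 0 := by
    rcases lt_trichotomy K 0 with h | h | h
    · exact h
    · rw [h] at h4; simp at h4
    · have h5 : 0 < xy*K := mul_pos hxy h
      have := mul_neg_of_neg_of_pos hLneg h5
      linarith
  linarith [hKM, hM, hK]

/-- Two distinct circles of the same tangency type w.r.t. the inscribed circle cannot meet
the two positive semiaxes at the same pair of points. -/
lemma case5 (σ x y c1 c2 s t a1 a2 b1 b2 : ℝ)
    (hσ : σ = 1 ∨ σ = -1)
    (hx : 0 < x) (hy : 0 < y) (hc1 : c1 < 0) (hc2 : c2 < 0) (hcne : c1 ≠ c2)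
    (hs : 0 < s) (ht : 0 < t)
    (ha1 : x^2 - 2*a1*x + c1 = 0) (ha2 : y^2 - 2*a2*y + c1 = 0)
    (hra : a1^2 + a2^2 - s^2 = c1) (hta : c1 - 2*a1 - 2*a2 + 1 = 2*σ*s)
    (hb1 : x^2 - 2*b1*x + c2 = 0) (hb2 : y^2 - 2*b2*y + c2 = 0)
    (hrb : b1^2 + b2^2 - t^2 = c2) (htb : c2 - 2*b1 - 2*b2 + 1 = 2*σ*t) : False := by
  have hσ2 : σ^2 = 1 := by rcases hσ with h | h <;> rw [h] <;> norm_num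
  have hxy : 0 < x*y := mul_pos hx hy
  have hS1 : (x*y - x - y)*c1 + (1-x-y)*(x*y) = 2*σ*s*(x*y) := by
    linear_combination (x*y)*hta - y*ha1 - x*ha2
  have hS2 : (x*y - x - y)*c2 + (1-x-y)*(x*y) = 2*σ*t*(x*y) := by
    linear_combination (x*y)*htb - y*hb1 - x*hb2
  have hS1sq : ((x*y - x - y)*c1 + (1-x-y)*(x*y))^2 = 4*s^2*x^2*y^2 := by
    have h' : ((x*y - x - y)*c1 + (1-x-y)*(x*y))^2 = (2*σ*s*(x*y))^2 := by rw [hS1]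
    linear_combination h' + (4*s^2*x^2*y^2)*hσ2
  have hS2sq : ((x*y - x - y)*c2 + (1-x-y)*(x*y))^2 = 4*t^2*x^2*y^2 := by
    have h' : ((x*y - x - y)*c2 + (1-x-y)*(x*y))^2 = (2*σ*t*(x*y))^2 := by rw [hS2]
    linear_combination h' + (4*t^2*x^2*y^2)*hσ2
  have hg1xy : x*y*((x*y+2*(1-x-y))*c1^2 + 2*(x*y-x-y)*(1-x-y)*c1
      + x*y*((1-x-y)^2-x^2-y^2)) = 0 := by
    linear_combination hS1sq - y^2*(x^2+c1+2*a1*x)*ha1 - x^2*(y^2+c1+2*a2*y)*ha2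
      - (4*x^2*y^2)*hra
  have hg2xy : x*y*((x*y+2*(1-x-y))*c2^2 + 2*(x*y-x-y)*(1-x-y)*c2
      + x*y*((1-x-y)^2-x^2-y^2)) = 0 := by
    linear_combination hS2sq - y^2*(x^2+c2+2*b1*x)*hb1 - x^2*(y^2+c2+2*b2*y)*hb2
      - (4*x^2*y^2)*hrb
  have hg1 : (x*y+2*(1-x-y))*c1^2 + 2*(x*y-x-y)*(1-x-y)*c1
      + x*y*((1-x-y)^2-x^2-y^2) = 0 := by
    rcases mul_eq_zero.mp hg1xy with h | h
    · exact absurd h (ne_of_gt hxy)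
    · exact h
  have hg2 : (x*y+2*(1-x-y))*c2^2 + 2*(x*y-x-y)*(1-x-y)*c2
      + x*y*((1-x-y)^2-x^2-y^2) = 0 := by
    rcases mul_eq_zero.mp hg2xy with h | h
    · exact absurd h (ne_of_gt hxy)
    · exact h
  have hdiff : (c1 - c2)*((x*y+2*(1-x-y))*(c1+c2) + 2*(x*y-x-y)*(1-x-y)) = 0 := by
    linear_combination hg1 - hg2
  have hsum : (x*y+2*(1-x-y))*(c1+c2) + 2*(x*y-x-y)*(1-x-y) = 0 := by
    rcases mul_eq_zero.mp hdiff with h | h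
    · exact absurd (sub_eq_zero.mp h) hcne
    · exact h
  by_cases hL0 : x*y+2*(1-x-y) = 0
  · -- degenerate: leading coefficient vanishes
    have hMN : (x*y-x-y)*(1-x-y) = 0 := by
      rw [hL0] at hsum; linarith
    have hK0 : x*y*((1-x-y)^2-x^2-y^2) = 0 := by
      linear_combination hg1 - (2*c1)*hMN - (c1^2)*hL0
    have hK : (1-x-y)^2-x^2-y^2 = 0 := by
      rcases mul_eq_zero.mp hK0 with h | h
      · exact absurd h (ne_of_gt hxy)
      · exact h
    rcases mul_eq_zero.mp hMN with h | h
    · have h1 : x*y = x + y := by linarith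
      have h2 : x + y = 2 := by linarith [hL0, h1]
      exact deg2aux x y h1 h2
    · exact deg2aux' x y hx hy h hK
  · have hprodv : (x*y+2*(1-x-y))^2*(c1*c2)
        - (x*y+2*(1-x-y))*(x*y*((1-x-y)^2-x^2-y^2)) = 0 := by
      linear_combination ((x*y+2*(1-x-y))*c1)*hsum - (x*y+2*(1-x-y))*hg1
    have key1 : (x*y+2*(1-x-y))^2*(((x*y-x-y)*c1 + (1-x-y)*(x*y))
          * ((x*y-x-y)*c2 + (1-x-y)*(x*y)))
        + (x*y+2*(1-x-y))*((x*y)*((x^2+y^2)*((x*y-x-y)^2+(1-x-y)^2))) = 0 := by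
      linear_combination ((x*y-x-y)^2)*hprodv
        + ((x*y-x-y)*(1-x-y)*(x*y)*(x*y+2*(1-x-y)))*hsum
    have key2 : (x*y+2*(1-x-y))*(((x*y-x-y)*c1 + (1-x-y)*(x*y))
          + ((x*y-x-y)*c2 + (1-x-y)*(x*y)))
        + 2*(1-x-y)*(x^2+y^2) = 0 := by
      linear_combination (x*y-x-y)*hsum
    have hS1S2 : 0 < ((x*y-x-y)*c1 + (1-x-y)*(x*y))*((x*y-x-y)*c2 + (1-x-y)*(x*y)) := by
      have h4 : ((x*y-x-y)*c1 + (1-x-y)*(x*y))*((x*y-x-y)*c2 + (1-x-y)*(x*y))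
          = 4*s*t*x^2*y^2 := by
        rw [hS1, hS2]; linear_combination (4*s*t*x^2*y^2)*hσ2
      rw [h4]; positivity
    have hLneg : x*y+2*(1-x-y) < 0 := by
      apply signA _ _ _ key1 hS1S2 hL0
      positivity
    rcases hσ with hσ1 | hσ1
    · -- σ = 1
      have hS1pos : 0 < (x*y-x-y)*c1 + (1-x-y)*(x*y) := by
        rw [hS1, hσ1]; positivity
      have hS2pos : 0 < (x*y-x-y)*c2 + (1-x-y)*(x*y) := by
        rw [hS2, hσ1]; positivity
      exact sigma1Branch (x*y+2*(1-x-y)) (1-x-y)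
        ((x*y-x-y)*c1 + (1-x-y)*(x*y)) ((x*y-x-y)*c2 + (1-x-y)*(x*y))
        (x*y) (x^2+y^2) key2 hLneg hS1pos hS2pos hxy (by positivity) (by ring)
    · -- σ = -1
      have hS1neg : (x*y-x-y)*c1 + (1-x-y)*(x*y) < 0 := by
        rw [hS1, hσ1]
        have : 0 < 2*s*(x*y) := by positivity
        linarith
      have hS2neg : (x*y-x-y)*c2 + (1-x-y)*(x*y) < 0 := by
        rw [hS2, hσ1]
        have : 0 < 2*t*(x*y) := by positivity
        linarith
      exact sigma2Branch (x*y+2*(1-x-y)) (1-x-y) (x*y-x-y) ((1-x-y)^2-x^2-y^2)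
        c1 c2 ((x*y-x-y)*c1 + (1-x-y)*(x*y)) ((x*y-x-y)*c2 + (1-x-y)*(x*y))
        (x*y) (x^2+y^2) hsum hprodv key2 hLneg hS1neg hS2neg hc1 hc2 hxy
        (by positivity) (by ring)



private lemma sGtOne (a1 a2 s : ℝ) (hs : 0 < s)
    (hta : (a1-1)^2 + (a2-1)^2 = (s-1)^2) (hIa : a1^2 + a2^2 < s^2) : 1 < s := by
  by_contra h
  push_neg at h
  have hCS : (a1*(1-a1)+a2*(1-a2))^2 ≤ (a1^2+a2^2)*((1-a1)^2+(1-a2)^2) := by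
    nlinarith [sq_nonneg (a1*(1-a2)-a2*(1-a1))]
  nlinarith [hCS, sq_nonneg (s-1), sq_nonneg (a1+a2), mul_pos hs (show (0:ℝ) < 1-s+s from by norm_num),
    mul_nonneg hs.le (show (0:ℝ) ≤ 1-s from by linarith), sq_nonneg (a1+a2-1)]

private lemma uNegBound (σ s u1 u2 : ℝ) (hσ2 : σ^2 = 1) (hs : 0 < s)
    (hu : u1^2 + u2^2 = 1)
    (hI : (1+σ*(s+σ)*u1)^2 + (1+σ*(s+σ)*u2)^2 < s^2) : -1 < u1 := by
  by_contra h
  push_neg at h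
  have h1 : 1 ≤ u1^2 := by nlinarith
  have h2 : u2^2 ≤ 0 := by linarith
  have h3 : u2 = 0 := by nlinarith [sq_nonneg u2]
  have h4 : u1 = -1 := by nlinarith [sq_nonneg (u1+1)]
  rw [h3, h4] at hI
  have h5 : (1 + σ*(s+σ)*(-1))^2 + (1 + σ*(s+σ)*0)^2 = s^2 + 1 := by
    linear_combination (s^2+2*σ*s+σ^2-1)*hσ2
  linarith [hI, h5]

private lemma rootPos (g w : ℝ) (hw : 0 ≤ w) (h : g^2 < w) : 0 < g + Real.sqrt w := by
  have h1 : Real.sqrt w ^ 2 = w := Real.sq_sqrt hw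
  have h2 := Real.sqrt_nonneg w
  by_contra hle
  push_neg at hle
  have h3 : Real.sqrt w ≤ -g := by linarith
  have h4 := mul_self_le_mul_self h2 h3
  nlinarith

private lemma geRoot (x g w : ℝ) (hw : 0 < w) (hb : g^2 < w) (hx : 0 < x)
    (hP : 0 ≤ (x-g)^2 - w) : g + Real.sqrt w ≤ x := by
  have h1 : Real.sqrt w ^ 2 = w := Real.sq_sqrt hw.le
  have h2 := Real.sqrt_nonneg w
  have hneg : g - Real.sqrt w < 0 := by nlinarith
  by_contra hlt
  push_neg at hlt
  have hfac : (x - (g + Real.sqrt w))*(x - (g - Real.sqrt w)) = (x-g)^2 - w := by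
    linear_combination (-1 : ℝ) * h1
  nlinarith [mul_neg_of_neg_of_pos (show x - (g + Real.sqrt w) < 0 from by linarith)
    (show 0 < x - (g - Real.sqrt w) from by linarith)]

private lemma leRoot (x g w : ℝ) (hw : 0 < w) (hb : g^2 < w) (hx : 0 < x)
    (hP : (x-g)^2 - w ≤ 0) : x ≤ g + Real.sqrt w := by
  have h1 : Real.sqrt w ^ 2 = w := Real.sq_sqrt hw.le
  have h2 := Real.sqrt_nonneg w
  have hneg : g - Real.sqrt w < 0 := by nlinarith
  by_contra hlt
  push_neg at hlt
  have hfac : (x - (g + Real.sqrt w))*(x - (g - Real.sqrt w)) = (x-g)^2 - w := by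
    linear_combination (-1 : ℝ) * h1
  nlinarith [mul_pos (show 0 < x - (g + Real.sqrt w) from by linarith)
    (show 0 < x - (g - Real.sqrt w) from by linarith)]

example : True := trivial

private lemma epsPos (u1 u2 v1 v2 : ℝ) (h : ¬(u1 = v1 ∧ u2 = v2)) :
    0 < (u1-v1)^2 + (u2-v2)^2 := by
  by_contra h'
  push_neg at h'
  refine h ⟨?_, ?_⟩ <;> nlinarith [sq_nonneg (u1-v1), sq_nonneg (u2-v2)]

private lemma wPos (a1 a2 s : ℝ) (hIa : a1^2+a2^2 < s^2) : 0 < s^2 - a2^2 := by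
  nlinarith [sq_nonneg a1]

private lemma sqEqOfSqEq (s t : ℝ) (hs : 0 < s) (ht : 0 < t) (h : s^2 = t^2) : s = t := by
  nlinarith [sq_nonneg (s-t), sq_nonneg (s+t)]

section PairLemma

set_option maxHeartbeats 2000000 in
/-- Two distinct type-I circles of the same tangency type w.r.t. the inscribed unit circle
centered at (1,1) have a common point in the open first quadrant. -/
lemma pairMain (σ a1 a2 b1 b2 s t : ℝ) (hσ : σ = 1 ∨ σ = -1)
    (hs : 0 < s) (ht : 0 < t)
    (hta : (a1-1)^2 + (a2-1)^2 = (s+σ)^2)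
    (htb : (b1-1)^2 + (b2-1)^2 = (t+σ)^2)
    (hIa : a1^2 + a2^2 < s^2) (hIb : b1^2 + b2^2 < t^2)
    (hne : ¬(a1 = b1 ∧ a2 = b2 ∧ s = t))
    (ivt_arc : ∀ o1 o2 r c1 c2 k p01 p02 p11 p12 : ℝ,
      o1^2+o2^2 < r^2 →
      (p01-o1)^2+(p02-o2)^2 = r^2 →
      (p11-o1)^2+(p12-o2)^2 = r^2 →
      0 ≤ p01 → 0 ≤ p02 → 0 < p01+p02 → 0 < p11 → 0 < p12 →
      ((p01-c1)^2+(p02-c2)^2-k) * ((p11-c1)^2+(p12-c2)^2-k) < 0 →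
      ∃ z1 z2 : ℝ, 0 < z1 ∧ 0 < z2 ∧ (z1-o1)^2+(z2-o2)^2 = r^2 ∧ (z1-c1)^2+(z2-c2)^2 = k)
    (case5 : ∀ σ' x y c1 c2 s' t' a1' a2' b1' b2' : ℝ,
      σ' = 1 ∨ σ' = -1 →
      0 < x → 0 < y → c1 < 0 → c2 < 0 → c1 ≠ c2 → 0 < s' → 0 < t' →
      x^2 - 2*a1'*x + c1 = 0 → y^2 - 2*a2'*y + c1 = 0 →
      a1'^2 + a2'^2 - s'^2 = c1 → c1 - 2*a1' - 2*a2' + 1 = 2*σ'*s' →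
      x^2 - 2*b1'*x + c2 = 0 → y^2 - 2*b2'*y + c2 = 0 →
      b1'^2 + b2'^2 - t'^2 = c2 → c2 - 2*b1' - 2*b2' + 1 = 2*σ'*t' → False) :
    ∃ z1 z2 : ℝ, 0 < z1 ∧ 0 < z2 ∧ (z1-a1)^2 + (z2-a2)^2 = s^2
      ∧ (z1-b1)^2 + (z2-b2)^2 = t^2 := by
  have hσ2 : σ^2 = 1 := by rcases hσ with h|h <;> rw [h] <;> norm_num
  have hsσ : 0 < s + σ := by
    rcases hσ with h|h
    · rw [h]; linarith
    · rw [h]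
      have h1 : (a1-1)^2 + (a2-1)^2 = (s-1)^2 := by rw [h] at hta; linear_combination hta
      have := sGtOne a1 a2 s hs h1 hIa
      linarith
  have htσ : 0 < t + σ := by
    rcases hσ with h|h
    · rw [h]; linarith
    · rw [h]
      have h1 : (b1-1)^2 + (b2-1)^2 = (t-1)^2 := by rw [h] at htb; linear_combination htb
      have := sGtOne b1 b2 t ht h1 hIb
      linarith
  -- unit direction coordinates
  obtain ⟨u1, ha1u⟩ : ∃ u, a1 = 1 + σ*(s+σ)*u := by
    refine ⟨σ*(a1-1)/(s+σ), ?_⟩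
    field_simp
    linear_combination (-(a1-1))*hσ2
  obtain ⟨u2, ha2u⟩ : ∃ u, a2 = 1 + σ*(s+σ)*u := by
    refine ⟨σ*(a2-1)/(s+σ), ?_⟩
    field_simp
    linear_combination (-(a2-1))*hσ2
  obtain ⟨v1, hb1v⟩ : ∃ v, b1 = 1 + σ*(t+σ)*v := by
    refine ⟨σ*(b1-1)/(t+σ), ?_⟩
    field_simp
    linear_combination (-(b1-1))*hσ2
  obtain ⟨v2, hb2v⟩ : ∃ v, b2 = 1 + σ*(t+σ)*v := by
    refine ⟨σ*(b2-1)/(t+σ), ?_⟩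
    field_simp
    linear_combination (-(b2-1))*hσ2
  have hu : u1^2 + u2^2 = 1 := by
    have h := hta
    rw [ha1u, ha2u] at h
    have h2 : (s+σ)^2*(u1^2+u2^2) = (s+σ)^2*1 := by
      linear_combination h - ((s+σ)^2*(u1^2+u2^2))*hσ2
    exact mul_left_cancel₀ (pow_ne_zero 2 hsσ.ne') h2
  have hv : v1^2 + v2^2 = 1 := by
    have h := htb
    rw [hb1v, hb2v] at h
    have h2 : (t+σ)^2*(v1^2+v2^2) = (t+σ)^2*1 := by
      linear_combination h - ((t+σ)^2*(v1^2+v2^2))*hσ2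
    exact mul_left_cancel₀ (pow_ne_zero 2 htσ.ne') h2
  have hIu : (1+σ*(s+σ)*u1)^2 + (1+σ*(s+σ)*u2)^2 < s^2 := by rw [← ha1u, ← ha2u]; exact hIa
  have hIv : (1+σ*(t+σ)*v1)^2 + (1+σ*(t+σ)*v2)^2 < t^2 := by rw [← hb1v, ← hb2v]; exact hIb
  have hu1gt : -1 < u1 := uNegBound σ s u1 u2 hσ2 hs hu hIu
  have hu2gt : -1 < u2 := uNegBound σ s u2 u1 hσ2 hs (by linarith) (by linarith)
  have hv1gt : -1 < v1 := uNegBound σ t v1 v2 hσ2 ht hv hIv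
  have hv2gt : -1 < v2 := uNegBound σ t v2 v1 hσ2 ht (by linarith) (by linarith)
  -- tangency points on the two circles
  have hpa : ((1+u1)-a1)^2 + ((1+u2)-a2)^2 = s^2 := by
    rw [ha1u, ha2u]
    linear_combination ((σ*(s+σ)-1)^2)*hu + (s^2+2*σ*s+σ^2-1)*hσ2
  have hqb : ((1+v1)-b1)^2 + ((1+v2)-b2)^2 = t^2 := by
    rw [hb1v, hb2v]
    linear_combination ((σ*(t+σ)-1)^2)*hv + (t^2+2*σ*t+σ^2-1)*hσ2
  have POWBP : ((1+u1)-b1)^2 + ((1+u2)-b2)^2 - t^2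
      = σ*(t+σ)*((u1-v1)^2+(u2-v2)^2) := by
    rw [hb1v, hb2v]
    linear_combination (1-σ*(t+σ))*hu - (σ*(t+σ))*(1-σ*(t+σ))*hv
      + (t^2+2*σ*t+σ^2-1)*hσ2
  have POWAQ : ((1+v1)-a1)^2 + ((1+v2)-a2)^2 - s^2
      = σ*(s+σ)*((u1-v1)^2+(u2-v2)^2) := by
    rw [ha1u, ha2u]
    linear_combination (1-σ*(s+σ))*hv - (σ*(s+σ))*(1-σ*(s+σ))*hu
      + (s^2+2*σ*s+σ^2-1)*hσ2
  by_cases hpq : u1 = v1 ∧ u2 = v2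
  · refine ⟨1+u1, 1+u2, by linarith, by linarith, hpa, ?_⟩
    rw [hb1v, hb2v, ← hpq.1, ← hpq.2]
    linear_combination ((σ*(t+σ)-1)^2)*hu + (t^2+2*σ*t+σ^2-1)*hσ2
  · have hε : 0 < (u1-v1)^2 + (u2-v2)^2 := epsPos u1 u2 v1 v2 hpq
    -- axis crossing data
    have hwxa : 0 < s^2 - a2^2 := wPos a1 a2 s hIa
    have hwya : 0 < s^2 - a1^2 := wPos a2 a1 s (by linarith)
    have hwxb : 0 < t^2 - b2^2 := wPos b1 b2 t hIb
    have hwyb : 0 < t^2 - b1^2 := wPos b2 b1 t (by linarith)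
    have hwxa1 : a1^2 < s^2 - a2^2 := by linarith
    have hwya1 : a2^2 < s^2 - a1^2 := by linarith
    have hwxb1 : b1^2 < t^2 - b2^2 := by linarith
    have hwyb1 : b2^2 < t^2 - b1^2 := by linarith
    have hxapos : 0 < a1 + Real.sqrt (s^2-a2^2) := rootPos a1 _ hwxa.le hwxa1
    have hyapos : 0 < a2 + Real.sqrt (s^2-a1^2) := rootPos a2 _ hwya.le hwya1
    have hxbpos : 0 < b1 + Real.sqrt (t^2-b2^2) := rootPos b1 _ hwxb.le hwxb1
    have hybpos : 0 < b2 + Real.sqrt (t^2-b1^2) := rootPos b2 _ hwyb.le hwyb1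
    have hXa_on : ((a1 + Real.sqrt (s^2-a2^2))-a1)^2 + ((0:ℝ)-a2)^2 = s^2 := by
      have h1 : (Real.sqrt (s^2-a2^2))^2 = s^2-a2^2 := Real.sq_sqrt hwxa.le
      linear_combination h1
    have hYa_on : ((0:ℝ)-a1)^2 + ((a2 + Real.sqrt (s^2-a1^2))-a2)^2 = s^2 := by
      have h1 : (Real.sqrt (s^2-a1^2))^2 = s^2-a1^2 := Real.sq_sqrt hwya.le
      linear_combination h1
    have hXb_on : ((b1 + Real.sqrt (t^2-b2^2))-b1)^2 + ((0:ℝ)-b2)^2 = t^2 := by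
      have h1 : (Real.sqrt (t^2-b2^2))^2 = t^2-b2^2 := Real.sq_sqrt hwxb.le
      linear_combination h1
    have hYb_on : ((0:ℝ)-b1)^2 + ((b2 + Real.sqrt (t^2-b1^2))-b2)^2 = t^2 := by
      have h1 : (Real.sqrt (t^2-b1^2))^2 = t^2-b1^2 := Real.sq_sqrt hwyb.le
      linear_combination h1
    by_cases hA : (((a1 + Real.sqrt (s^2-a2^2))-b1)^2+((0:ℝ)-b2)^2-t^2)
        * (((1+u1)-b1)^2+((1+u2)-b2)^2-t^2) < 0
    · exact ivt_arc a1 a2 s b1 b2 (t^2) _ 0 (1+u1) (1+u2) hIa hXa_on hpa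
        hxapos.le le_rfl (by linarith) (by linarith) (by linarith) hA
    by_cases hB : (((0:ℝ)-b1)^2+((a2 + Real.sqrt (s^2-a1^2))-b2)^2-t^2)
        * (((1+u1)-b1)^2+((1+u2)-b2)^2-t^2) < 0
    · exact ivt_arc a1 a2 s b1 b2 (t^2) 0 _ (1+u1) (1+u2) hIa hYa_on hpa
        le_rfl hyapos.le (by linarith) (by linarith) (by linarith) hB
    by_cases hC : (((b1 + Real.sqrt (t^2-b2^2))-a1)^2+((0:ℝ)-a2)^2-s^2)
        * (((1+v1)-a1)^2+((1+v2)-a2)^2-s^2) < 0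
    · obtain ⟨z1, z2, h1, h2, h3, h4⟩ := ivt_arc b1 b2 t a1 a2 (s^2) _ 0 (1+v1) (1+v2)
        hIb hXb_on hqb hxbpos.le le_rfl (by linarith) (by linarith) (by linarith) hC
      exact ⟨z1, z2, h1, h2, h4, h3⟩
    by_cases hD : (((0:ℝ)-a1)^2+((b2 + Real.sqrt (t^2-b1^2))-a2)^2-s^2)
        * (((1+v1)-a1)^2+((1+v2)-a2)^2-s^2) < 0
    · obtain ⟨z1, z2, h1, h2, h3, h4⟩ := ivt_arc b1 b2 t a1 a2 (s^2) 0 _ (1+v1) (1+v2)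
        hIb hYb_on hqb le_rfl hybpos.le (by linarith) (by linarith) (by linarith) hD
      exact ⟨z1, z2, h1, h2, h4, h3⟩
    -- degenerate case: the circles cross the positive semiaxes at common points
    exfalso
    push_neg at hA hB hC hD
    have hxeq : a1 + Real.sqrt (s^2-a2^2) = b1 + Real.sqrt (t^2-b2^2) := by
      rcases hσ with hσ1 | hσ1
      · have hPBP : 0 < ((1+u1)-b1)^2+((1+u2)-b2)^2-t^2 := by
          rw [POWBP, hσ1]
          have h9 := mul_pos (show (0:ℝ) < t+1 by linarith) hε
          linarith [h9]
        have hPAQ : 0 < ((1+v1)-a1)^2+((1+v2)-a2)^2-s^2 := by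
          rw [POWAQ, hσ1]
          have h9 := mul_pos (show (0:ℝ) < s+1 by linarith) hε
          linarith [h9]
        have hA' : 0 ≤ ((a1 + Real.sqrt (s^2-a2^2))-b1)^2+((0:ℝ)-b2)^2-t^2 := by
          by_contra h
          push_neg at h
          exact absurd (mul_neg_of_neg_of_pos h hPBP) (not_lt.mpr hA)
        have hC' : 0 ≤ ((b1 + Real.sqrt (t^2-b2^2))-a1)^2+((0:ℝ)-a2)^2-s^2 := by
          by_contra h
          push_neg at h
          exact absurd (mul_neg_of_neg_of_pos h hPAQ) (not_lt.mpr hC)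
        have hge1 := geRoot (a1 + Real.sqrt (s^2-a2^2)) b1 (t^2-b2^2) hwxb hwxb1 hxapos
          (by linarith [hA'])
        have hge2 := geRoot (b1 + Real.sqrt (t^2-b2^2)) a1 (s^2-a2^2) hwxa hwxa1 hxbpos
          (by linarith [hC'])
        linarith
      · have hPBP : ((1+u1)-b1)^2+((1+u2)-b2)^2-t^2 < 0 := by
          rw [POWBP, hσ1]
          have h9 := mul_pos (show (0:ℝ) < t-1 by rw [hσ1] at htσ; linarith) hε
          linarith [h9]
        have hPAQ : ((1+v1)-a1)^2+((1+v2)-a2)^2-s^2 < 0 := by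
          rw [POWAQ, hσ1]
          have h9 := mul_pos (show (0:ℝ) < s-1 by rw [hσ1] at hsσ; linarith) hε
          linarith [h9]
        have hA' : ((a1 + Real.sqrt (s^2-a2^2))-b1)^2+((0:ℝ)-b2)^2-t^2 ≤ 0 := by
          by_contra h
          push_neg at h
          exact absurd (mul_neg_of_pos_of_neg h hPBP) (not_lt.mpr hA)
        have hC' : ((b1 + Real.sqrt (t^2-b2^2))-a1)^2+((0:ℝ)-a2)^2-s^2 ≤ 0 := by
          by_contra h
          push_neg at h
          exact absurd (mul_neg_of_pos_of_neg h hPAQ) (not_lt.mpr hC)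
        have hle1 := leRoot (a1 + Real.sqrt (s^2-a2^2)) b1 (t^2-b2^2) hwxb hwxb1 hxapos
          (by linarith [hA'])
        have hle2 := leRoot (b1 + Real.sqrt (t^2-b2^2)) a1 (s^2-a2^2) hwxa hwxa1 hxbpos
          (by linarith [hC'])
        linarith
    have hyeq : a2 + Real.sqrt (s^2-a1^2) = b2 + Real.sqrt (t^2-b1^2) := by
      rcases hσ with hσ1 | hσ1
      · have hPBP : 0 < ((1+u1)-b1)^2+((1+u2)-b2)^2-t^2 := by
          rw [POWBP, hσ1]
          have h9 := mul_pos (show (0:ℝ) < t+1 by linarith) hε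
          linarith [h9]
        have hPAQ : 0 < ((1+v1)-a1)^2+((1+v2)-a2)^2-s^2 := by
          rw [POWAQ, hσ1]
          have h9 := mul_pos (show (0:ℝ) < s+1 by linarith) hε
          linarith [h9]
        have hB' : 0 ≤ ((0:ℝ)-b1)^2+((a2 + Real.sqrt (s^2-a1^2))-b2)^2-t^2 := by
          by_contra h
          push_neg at h
          exact absurd (mul_neg_of_neg_of_pos h hPBP) (not_lt.mpr hB)
        have hD' : 0 ≤ ((0:ℝ)-a1)^2+((b2 + Real.sqrt (t^2-b1^2))-a2)^2-s^2 := by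
          by_contra h
          push_neg at h
          exact absurd (mul_neg_of_neg_of_pos h hPAQ) (not_lt.mpr hD)
        have hge1 := geRoot (a2 + Real.sqrt (s^2-a1^2)) b2 (t^2-b1^2) hwyb hwyb1 hyapos
          (by linarith [hB'])
        have hge2 := geRoot (b2 + Real.sqrt (t^2-b1^2)) a2 (s^2-a1^2) hwya hwya1 hybpos
          (by linarith [hD'])
        linarith
      · have hPBP : ((1+u1)-b1)^2+((1+u2)-b2)^2-t^2 < 0 := by
          rw [POWBP, hσ1]
          have h9 := mul_pos (show (0:ℝ) < t-1 by rw [hσ1] at htσ; linarith) hε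
          linarith [h9]
        have hPAQ : ((1+v1)-a1)^2+((1+v2)-a2)^2-s^2 < 0 := by
          rw [POWAQ, hσ1]
          have h9 := mul_pos (show (0:ℝ) < s-1 by rw [hσ1] at hsσ; linarith) hε
          linarith [h9]
        have hB' : ((0:ℝ)-b1)^2+((a2 + Real.sqrt (s^2-a1^2))-b2)^2-t^2 ≤ 0 := by
          by_contra h
          push_neg at h
          exact absurd (mul_neg_of_pos_of_neg h hPBP) (not_lt.mpr hB)
        have hD' : ((0:ℝ)-a1)^2+((b2 + Real.sqrt (t^2-b1^2))-a2)^2-s^2 ≤ 0 := by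
          by_contra h
          push_neg at h
          exact absurd (mul_neg_of_pos_of_neg h hPAQ) (not_lt.mpr hD)
        have hle1 := leRoot (a2 + Real.sqrt (s^2-a1^2)) b2 (t^2-b1^2) hwyb hwyb1 hyapos
          (by linarith [hB'])
        have hle2 := leRoot (b2 + Real.sqrt (t^2-b1^2)) a2 (s^2-a1^2) hwya hwya1 hybpos
          (by linarith [hD'])
        linarith
    -- now apply case5 at x = xa, y = ya
    have Ea1 : (a1 + Real.sqrt (s^2-a2^2))^2 - 2*a1*(a1 + Real.sqrt (s^2-a2^2))
        + (a1^2+a2^2-s^2) = 0 := by linear_combination hXa_on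
    have Ea2 : (a2 + Real.sqrt (s^2-a1^2))^2 - 2*a2*(a2 + Real.sqrt (s^2-a1^2))
        + (a1^2+a2^2-s^2) = 0 := by linear_combination hYa_on
    have Eb1 : (a1 + Real.sqrt (s^2-a2^2))^2 - 2*b1*(a1 + Real.sqrt (s^2-a2^2))
        + (b1^2+b2^2-t^2) = 0 := by rw [hxeq]; linear_combination hXb_on
    have Eb2 : (a2 + Real.sqrt (s^2-a1^2))^2 - 2*b2*(a2 + Real.sqrt (s^2-a1^2))
        + (b1^2+b2^2-t^2) = 0 := by rw [hyeq]; linear_combination hYb_on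
    have Ta : (a1^2+a2^2-s^2) - 2*a1 - 2*a2 + 1 = 2*σ*s := by
      linear_combination hta + hσ2
    have Tb : (b1^2+b2^2-t^2) - 2*b1 - 2*b2 + 1 = 2*σ*t := by
      linear_combination htb + hσ2
    have hc12 : a1^2+a2^2-s^2 ≠ b1^2+b2^2-t^2 := by
      intro hceq
      have h01 : 2*(a1 + Real.sqrt (s^2-a2^2))*(b1-a1) = 0 := by
        linear_combination Ea1 - Eb1 - hceq
      have h02 : 2*(a2 + Real.sqrt (s^2-a1^2))*(b2-a2) = 0 := by
        linear_combination Ea2 - Eb2 - hceq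
      have e1 : a1 = b1 := by
        rcases mul_eq_zero.mp h01 with h | h
        · linarith [hxapos]
        · linarith
      have e2 : a2 = b2 := by
        rcases mul_eq_zero.mp h02 with h | h
        · linarith [hyapos]
        · linarith
      have e3 : s = t := by
        have h3 : s^2 = t^2 := by rw [e1, e2] at hceq; linarith
        exact sqEqOfSqEq s t hs ht h3
      exact hne ⟨e1, e2, e3⟩
    exact case5 σ (a1 + Real.sqrt (s^2-a2^2)) (a2 + Real.sqrt (s^2-a1^2))
      (a1^2+a2^2-s^2) (b1^2+b2^2-t^2) s t a1 a2 b1 b2 hσ hxapos hyapos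
      (by linarith) (by linarith) hc12 hs ht Ea1 Ea2 rfl Ta Eb1 Eb2 rfl Tb

end PairLemma


private lemma pt_zero (x y : ℝ) : pt x y 0 = x := by simp [pt]
private lemma pt_one (x y : ℝ) : pt x y 1 = y := by simp [pt]

private lemma dist_coords (x y : Plane) :
    dist x y = Real.sqrt ((x 0 - y 0)^2 + (x 1 - y 1)^2) := by
  rw [EuclideanSpace.dist_eq, Fin.sum_univ_two]
  simp [Real.dist_eq, sq_abs]

private lemma dist_eq_of_sq (x y : Plane) (r : ℝ) (hr : 0 ≤ r)
    (h : (x 0 - y 0)^2 + (x 1 - y 1)^2 = r^2) : dist x y = r := by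
  rw [dist_coords, h, Real.sqrt_sq hr]

private lemma sq_of_dist_eq (x y : Plane) (r : ℝ) (h : dist x y = r) :
    (x 0 - y 0)^2 + (x 1 - y 1)^2 = r^2 := by
  rw [dist_coords] at h
  have h2 : (Real.sqrt ((x 0 - y 0)^2 + (x 1 - y 1)^2))^2 = r^2 := by rw [h]
  rwa [Real.sq_sqrt (by positivity)] at h2

/-- Convert a tangency statement to a scaled squared equation with a sign flag. -/
private lemma tangent_to_scaled (a : Plane) (s t₀ : ℝ) (ht₀ : 0 < t₀)
    (hd : dist (pt t₀ t₀) a = t₀ + s ∨ dist (pt t₀ t₀) a = |t₀ - s|) :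
    (a 0/t₀ - 1)^2 + (a 1/t₀ - 1)^2 = (s/t₀ + 1)^2 ∨
    (a 0/t₀ - 1)^2 + (a 1/t₀ - 1)^2 = (s/t₀ + (-1))^2 := by
  rcases hd with h | h
  · left
    have h2 := sq_of_dist_eq _ _ _ h
    rw [pt_zero, pt_one] at h2
    field_simp
    linear_combination h2
  · right
    have h2 := sq_of_dist_eq _ _ _ h
    rw [pt_zero, pt_one] at h2
    rw [sq_abs] at h2
    field_simp
    linear_combination h2

/-- Scaled type-I condition. -/
private lemma typeI_scaled (a : Plane) (s t₀ : ℝ) (ht₀ : 0 < t₀) (hs : 0 < s)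
    (h : dist (0 : Plane) a < s) :
    (a 0/t₀)^2 + (a 1/t₀)^2 < (s/t₀)^2 := by
  have h1 : dist (0 : Plane) a ^ 2 < s^2 := by
    have := dist_nonneg (x := (0:Plane)) (y := a)
    nlinarith
  rw [dist_coords] at h1
  rw [Real.sq_sqrt (by positivity)] at h1
  have h2 : ((0:Plane)) 0 = 0 := rfl
  have h3 : ((0:Plane)) 1 = 0 := rfl
  rw [h2, h3] at h1
  rw [div_pow, div_pow, div_pow, ← add_div, div_lt_div_iff₀ (by positivity) (by positivity)]
  have h4 := mul_lt_mul_of_pos_right h1 (show (0:ℝ) < t₀^2 by positivity)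
  nlinarith [h4]

/-- Reconstruct a distance equation from the scaled one. -/
private lemma unscale (z1 z2 : ℝ) (a : Plane) (s t₀ : ℝ) (ht₀ : 0 < t₀) (hs : 0 < s)
    (h : (z1 - a 0/t₀)^2 + (z2 - a 1/t₀)^2 = (s/t₀)^2) :
    dist (pt (t₀*z1) (t₀*z2)) a = s := by
  apply dist_eq_of_sq _ _ _ hs.le
  rw [pt_zero, pt_one]
  have h2 : (t₀*z1 - a 0)^2 + (t₀*z2 - a 1)^2 = t₀^2*((z1 - a 0/t₀)^2 + (z2 - a 1/t₀)^2) := by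
    field_simp
  rw [h2, h]
  field_simp

/-- Transfer distinctness to scaled coordinates. -/
private lemma ne_scaled (a b : Plane) (s t t₀ : ℝ) (ht₀ : 0 < t₀) (h : (a, s) ≠ (b, t)) :
    ¬(a 0/t₀ = b 0/t₀ ∧ a 1/t₀ = b 1/t₀ ∧ s/t₀ = t/t₀) := by
  rintro ⟨e1, e2, e3⟩
  apply h
  have f1 : a 0 = b 0 := by field_simp at e1; exact e1
  have f2 : a 1 = b 1 := by field_simp at e2; exact e2
  have f3 : s = t := by field_simp at e3; exact e3
  have hab : a = b := by
    ext i
    fin_cases i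
    · exact f1
    · exact f2
  rw [hab, f3]

/-- Lemma 10: if three pairwise distinct type-I circles have a common tangent circle
inscribed in the first quadrant, then some two of them meet in the open first quadrant. -/
theorem common_inscribed_solution_forces_intersection
    (a b c : Plane) (s t u : ℝ) (hs : 0 < s) (ht : 0 < t) (hu : 0 < u)
    (hab : (a, s) ≠ (b, t)) (hac : (a, s) ≠ (c, u)) (hbc : (b, t) ≠ (c, u))
    (hα : dist (0 : Plane) a < s) (hβ : dist (0 : Plane) b < t)
    (hγ : dist (0 : Plane) c < u)
    (t₀ : ℝ) (ht₀ : 0 < t₀)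
    (htan : Tangent (pt t₀ t₀, t₀) (a, s) ∧ Tangent (pt t₀ t₀, t₀) (b, t) ∧
      Tangent (pt t₀ t₀, t₀) (c, u)) :
    ∃ z : Plane, 0 < z 0 ∧ 0 < z 1 ∧
      ((dist z a = s ∧ dist z b = t) ∨ (dist z a = s ∧ dist z c = u) ∨
        (dist z b = t ∧ dist z c = u)) := by
  obtain ⟨⟨_, hda⟩, ⟨_, hdb⟩, ⟨_, hdc⟩⟩ := htan
  have ha' := tangent_to_scaled a s t₀ ht₀ hda
  have hb' := tangent_to_scaled b t t₀ ht₀ hdb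
  have hc' := tangent_to_scaled c u t₀ ht₀ hdc
  have hIa := typeI_scaled a s t₀ ht₀ hs hα
  have hIb := typeI_scaled b t t₀ ht₀ ht hβ
  have hIc := typeI_scaled c u t₀ ht₀ hu hγ
  have hsp : 0 < s/t₀ := div_pos hs ht₀
  have htp : 0 < t/t₀ := div_pos ht ht₀
  have hup : 0 < u/t₀ := div_pos hu ht₀
  -- helper to package a pair solution
  have mk : ∀ (x y : Plane) (r q : ℝ), 0 < r → 0 < q → (x, r) ≠ (y, q) →
      ((x 0/t₀ - 1)^2 + (x 1/t₀ - 1)^2 = (r/t₀ + 1)^2 ∧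
       (y 0/t₀ - 1)^2 + (y 1/t₀ - 1)^2 = (q/t₀ + 1)^2) ∨
      ((x 0/t₀ - 1)^2 + (x 1/t₀ - 1)^2 = (r/t₀ + (-1))^2 ∧
       (y 0/t₀ - 1)^2 + (y 1/t₀ - 1)^2 = (q/t₀ + (-1))^2) →
      (x 0/t₀)^2 + (x 1/t₀)^2 < (r/t₀)^2 → (y 0/t₀)^2 + (y 1/t₀)^2 < (q/t₀)^2 →
      ∃ z : Plane, 0 < z 0 ∧ 0 < z 1 ∧ dist z x = r ∧ dist z y = q := by
    intro x y r q hr hq hxy hσcase hIx hIy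
    have hrp : 0 < r/t₀ := div_pos hr ht₀
    have hqp : 0 < q/t₀ := div_pos hq ht₀
    have hnexy := ne_scaled x y r q t₀ ht₀ hxy
    have hpair : ∃ z1 z2 : ℝ, 0 < z1 ∧ 0 < z2 ∧
        (z1 - x 0/t₀)^2 + (z2 - x 1/t₀)^2 = (r/t₀)^2 ∧
        (z1 - y 0/t₀)^2 + (z2 - y 1/t₀)^2 = (q/t₀)^2 := by
      rcases hσcase with ⟨h1, h2⟩ | ⟨h1, h2⟩
      · exact pairMain 1 (x 0/t₀) (x 1/t₀) (y 0/t₀) (y 1/t₀) (r/t₀) (q/t₀)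
          (Or.inl rfl) hrp hqp h1 h2 hIx hIy hnexy ivt_arc case5
      · exact pairMain (-1) (x 0/t₀) (x 1/t₀) (y 0/t₀) (y 1/t₀) (r/t₀) (q/t₀)
          (Or.inr rfl) hrp hqp h1 h2 hIx hIy hnexy ivt_arc case5
    obtain ⟨z1, z2, hz1, hz2, hzx, hzy⟩ := hpair
    refine ⟨pt (t₀*z1) (t₀*z2), ?_, ?_, ?_, ?_⟩
    · rw [pt_zero]; exact mul_pos ht₀ hz1
    · rw [pt_one]; exact mul_pos ht₀ hz2
    · exact unscale z1 z2 x r t₀ ht₀ hr hzx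
    · exact unscale z1 z2 y q t₀ ht₀ hq hzy
  rcases ha' with h1 | h1 <;> rcases hb' with h2 | h2 <;> rcases hc' with h3 | h3
  · obtain ⟨z, hz1, hz2, hd⟩ := mk a b s t hs ht hab (Or.inl ⟨h1, h2⟩) hIa hIb
    exact ⟨z, hz1, hz2, Or.inl hd⟩
  · obtain ⟨z, hz1, hz2, hd⟩ := mk a b s t hs ht hab (Or.inl ⟨h1, h2⟩) hIa hIb
    exact ⟨z, hz1, hz2, Or.inl hd⟩
  · obtain ⟨z, hz1, hz2, hd⟩ := mk a c s u hs hu hac (Or.inl ⟨h1, h3⟩) hIa hIc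
    exact ⟨z, hz1, hz2, Or.inr (Or.inl hd)⟩
  · obtain ⟨z, hz1, hz2, hd⟩ := mk b c t u ht hu hbc (Or.inr ⟨h2, h3⟩) hIb hIc
    exact ⟨z, hz1, hz2, Or.inr (Or.inr hd)⟩
  · obtain ⟨z, hz1, hz2, hd⟩ := mk b c t u ht hu hbc (Or.inl ⟨h2, h3⟩) hIb hIc
    exact ⟨z, hz1, hz2, Or.inr (Or.inr hd)⟩
  · obtain ⟨z, hz1, hz2, hd⟩ := mk a c s u hs hu hac (Or.inr ⟨h1, h3⟩) hIa hIc
    exact ⟨z, hz1, hz2, Or.inr (Or.inl hd)⟩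
  · obtain ⟨z, hz1, hz2, hd⟩ := mk a b s t hs ht hab (Or.inr ⟨h1, h2⟩) hIa hIb
    exact ⟨z, hz1, hz2, Or.inl hd⟩
  · obtain ⟨z, hz1, hz2, hd⟩ := mk a b s t hs ht hab (Or.inr ⟨h1, h2⟩) hIa hIb
    exact ⟨z, hz1, hz2, Or.inl hd⟩
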